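/- Let H be a finite-dimensional complex inner product space with anticommuting square-zero operators ∂, ∂̄ and adjoints ∂*, ∂̄*, and suppose ⋆ : H → H is a unitary (or anti-unitary conjugate-linear) isomorphism satisfying ∂* = −⋆ ∂̄ ⋆⁻¹ and ∂̄* = −⋆ ∂ ⋆⁻¹. Then ⋆ maps ker Δ_BC bijectively onto ker Δ_A, inducing an isomorphism between Bott-Chern cohomology (ker ∂ ∩ ker ∂̄)/im ∂∂̄ and Aeppli cohomology (ker ∂∂̄)/(im ∂ + im ∂̄). -/

import Mathlib

/-- The Bott-Chern Laplacian. -/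
def deltaBC {H : Type*} [AddCommGroup H] [Module ℂ H]
    (p q ps qs : H →ₗ[ℂ] H) : H →ₗ[ℂ] H :=
  (p ∘ₗ q) ∘ₗ (qs ∘ₗ ps) + (qs ∘ₗ ps) ∘ₗ (p ∘ₗ q)
    + (qs ∘ₗ p) ∘ₗ (ps ∘ₗ q) + (ps ∘ₗ q) ∘ₗ (qs ∘ₗ p)
    + qs ∘ₗ q + ps ∘ₗ p

/-- The Aeppli Laplacian. -/
def deltaA {H : Type*} [AddCommGroup H] [Module ℂ H]
    (p q ps qs : H →ₗ[ℂ] H) : H →ₗ[ℂ] H :=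
  p ∘ₗ ps + q ∘ₗ qs + (qs ∘ₗ ps) ∘ₗ (p ∘ₗ q) + (p ∘ₗ q) ∘ₗ (qs ∘ₗ ps)
    + (p ∘ₗ qs) ∘ₗ (q ∘ₗ ps) + (q ∘ₗ ps) ∘ₗ (p ∘ₗ qs)

/-! Conjugation by `⋆` sends `∂, ∂̄, ∂*, ∂̄*` to `-∂̄*, -∂*, -∂̄, -∂` (the last two by taking
adjoints, `⋆` being unitary), and this substitution turns `Δ_BC` into `Δ_A`; hence `⋆` carries
`ker Δ_BC` onto `ker Δ_A`. For the cohomologies a dimension count suffices: `ker ∂ ∩ ker ∂̄` is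
the orthogonal complement of `im ∂* + im ∂̄* = ⋆ (im ∂̄ + im ∂)`, so
`dim H_BC = n - dim (im ∂ + im ∂̄) - dim im ∂∂̄`, which by rank-nullity for `∂∂̄` is `dim H_A`. -/

namespace LinearEquiv

variable {R M N : Type*} [CommRing R] [AddCommGroup M] [Module R M] [AddCommGroup N] [Module R N]

theorem ker_conj (e : M ≃ₗ[R] N) (f : Module.End R M) :
    LinearMap.ker (e.conj f) = Submodule.map (e : M →ₗ[R] N) (LinearMap.ker f) := by
  rw [conj_apply, LinearMap.ker_comp, LinearEquiv.ker_comp,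
    Submodule.map_equiv_eq_comap_symm]

theorem range_conj (e : M ≃ₗ[R] N) (f : Module.End R M) :
    LinearMap.range (e.conj f) = Submodule.map (e : M →ₗ[R] N) (LinearMap.range f) := by
  rw [conj_apply, LinearMap.range_comp_of_range_eq_top _ e.symm.range, LinearMap.range_comp]

end LinearEquiv

section Adjoint

variable {𝕜 E F : Type*} [RCLike 𝕜] [NormedAddCommGroup E] [InnerProductSpace 𝕜 E]
  [NormedAddCommGroup F] [InnerProductSpace 𝕜 F] [FiniteDimensional 𝕜 E] [FiniteDimensional 𝕜 F]

theorem LinearEquiv.adjoint_conj (e : E ≃ₗ[𝕜] F) (he : ∀ x y, inner 𝕜 (e x) (e y) = inner 𝕜 x y)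
    (f : Module.End 𝕜 E) : LinearMap.adjoint (e.conj f) = e.conj (LinearMap.adjoint f) := by
  have he' : ∀ x y, inner 𝕜 (e x) y = inner 𝕜 x (e.symm y) := fun x y => by
    rw [← he x (e.symm y), apply_symm_apply]
  refine ((LinearMap.eq_adjoint_iff _ _).mpr fun x y => ?_).symm
  simp only [conj_apply_apply, he', LinearMap.adjoint_inner_left]
  rw [← he, apply_symm_apply]

theorem LinearEquiv.conj_adjoint_eq_neg (e : E ≃ₗ[𝕜] F)
    (he : ∀ x y, inner 𝕜 (e x) (e y) = inner 𝕜 x y) {f : Module.End 𝕜 E} {g : Module.End 𝕜 F}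
    (h : LinearMap.adjoint g = -e.conj f) :
    e.conj (LinearMap.adjoint f) = -g := by
  rw [← e.adjoint_conj he, ← neg_neg (e.conj f), ← h, map_neg, LinearMap.adjoint_adjoint]

theorem LinearMap.ker_inf_ker_eq_orthogonal_sup_range_adjoint (f g : E →ₗ[𝕜] F) :
    ker f ⊓ ker g = (range (adjoint f) ⊔ range (adjoint g))ᗮ := by
  rw [← Submodule.inf_orthogonal, orthogonal_range, orthogonal_range, adjoint_adjoint,
    adjoint_adjoint]

theorem finrank_ker_inf_ker_add_finrank_range_sup_range (e : E ≃ₗ[𝕜] E) {p q : Module.End 𝕜 E}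
    (hp : LinearMap.adjoint p = -e.conj q) (hq : LinearMap.adjoint q = -e.conj p) :
    Module.finrank 𝕜 ↥(LinearMap.ker p ⊓ LinearMap.ker q)
      + Module.finrank 𝕜 ↥(LinearMap.range p ⊔ LinearMap.range q) = Module.finrank 𝕜 E := by
  rw [LinearMap.ker_inf_ker_eq_orthogonal_sup_range_adjoint, hp, hq, LinearMap.range_neg,
    LinearMap.range_neg, e.range_conj, e.range_conj, ← Submodule.map_sup, sup_comm,
    ← e.finrank_map_eq (LinearMap.range p ⊔ LinearMap.range q), add_comm,
    Submodule.finrank_add_finrank_orthogonal]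

end Adjoint

section Anticommuting

open LinearMap

variable {R M : Type*} [CommRing R] [AddCommGroup M] [Module R M] {p q : Module.End R M}

theorem range_comp_le_ker_inf_ker (hp : p ∘ₗ p = 0) (hq : q ∘ₗ q = 0)
    (hpq : p ∘ₗ q + q ∘ₗ p = 0) : range (p ∘ₗ q) ≤ ker p ⊓ ker q := by
  rw [le_inf_iff, range_le_ker_iff, range_le_ker_iff, ← comp_assoc, ← comp_assoc, hp,
    eq_neg_of_add_eq_zero_right hpq, neg_comp, comp_assoc, hq]
  simp

theorem range_sup_range_le_ker_comp (hp : p ∘ₗ p = 0) (hq : q ∘ₗ q = 0)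
    (hpq : p ∘ₗ q + q ∘ₗ p = 0) : range p ⊔ range q ≤ ker (p ∘ₗ q) := by
  rw [sup_le_iff, range_le_ker_iff, range_le_ker_iff, comp_assoc, comp_assoc,
    eq_neg_of_add_eq_zero_right hpq, hq, comp_neg, ← comp_assoc, hp]
  simp

end Anticommuting

theorem nonempty_subquotient_equiv {K M : Type*} [Field K] [AddCommGroup M] [Module K M]
    [FiniteDimensional K M] {V₁ W₁ V₂ W₂ : Submodule K M} (h₁ : W₁ ≤ V₁) (h₂ : W₂ ≤ V₂)
    (h : Module.finrank K V₁ + Module.finrank K W₂ = Module.finrank K V₂ + Module.finrank K W₁) :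
    Nonempty ((V₁ ⧸ W₁.comap V₁.subtype) ≃ₗ[K] (V₂ ⧸ W₂.comap V₂.subtype)) := by
  have e₁ := Submodule.finrank_quotient_add_finrank (W₁.comap V₁.subtype)
  have e₂ := Submodule.finrank_quotient_add_finrank (W₂.comap V₂.subtype)
  rw [(Submodule.comapSubtypeEquivOfLe h₁).finrank_eq] at e₁
  rw [(Submodule.comapSubtypeEquivOfLe h₂).finrank_eq] at e₂
  exact ⟨LinearEquiv.ofFinrankEq _ _ (by omega)⟩

theorem LinearEquiv.conj_deltaBC {H H' : Type*} [AddCommGroup H] [Module ℂ H] [AddCommGroup H']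
    [Module ℂ H'] (e : H ≃ₗ[ℂ] H') (p q ps qs : Module.End ℂ H) :
    e.conj (deltaBC p q ps qs) = deltaBC (e.conj p) (e.conj q) (e.conj ps) (e.conj qs) := by
  simp only [deltaBC, map_add, conj_comp]

theorem deltaBC_neg_eq_deltaA {H : Type*} [AddCommGroup H] [Module ℂ H]
    (p q ps qs : Module.End ℂ H) : deltaBC (-qs) (-ps) (-q) (-p) = deltaA p q ps qs := by
  simp only [deltaBC, deltaA, LinearMap.neg_comp, LinearMap.comp_neg, neg_neg]
  abel

/-- A unitary isomorphism `⋆` with `∂* = -⋆ ∂̄ ⋆⁻¹` and `∂̄* = -⋆ ∂ ⋆⁻¹` maps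
`ker Δ_BC` bijectively onto `ker Δ_A`, inducing an isomorphism between Bott-Chern
cohomology `(ker ∂ ∩ ker ∂̄)/im ∂∂̄` and Aeppli cohomology `(ker ∂∂̄)/(im ∂ + im ∂̄)`. -/
theorem stmt12 {H : Type*} [NormedAddCommGroup H] [InnerProductSpace ℂ H]
    [FiniteDimensional ℂ H]
    (p q ps qs : H →ₗ[ℂ] H)
    (hp : p ∘ₗ p = 0) (hq : q ∘ₗ q = 0) (hpq : p ∘ₗ q + q ∘ₗ p = 0)
    (hps : ∀ x y : H, (inner ℂ (p x) y : ℂ) = inner ℂ x (ps y))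
    (hqs : ∀ x y : H, (inner ℂ (q x) y : ℂ) = inner ℂ x (qs y))
    (st : H ≃ₗ[ℂ] H)
    (hunit : ∀ x y : H, (inner ℂ (st x) (st y) : ℂ) = inner ℂ x y)
    (hst1 : ps = -((st : H →ₗ[ℂ] H) ∘ₗ q ∘ₗ (st.symm : H →ₗ[ℂ] H)))
    (hst2 : qs = -((st : H →ₗ[ℂ] H) ∘ₗ p ∘ₗ (st.symm : H →ₗ[ℂ] H))) :
    Submodule.map (st : H →ₗ[ℂ] H) (LinearMap.ker (deltaBC p q ps qs))
      = LinearMap.ker (deltaA p q ps qs) ∧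
    Nonempty (((LinearMap.ker p ⊓ LinearMap.ker q : Submodule ℂ H) ⧸
        Submodule.comap (LinearMap.ker p ⊓ LinearMap.ker q).subtype
          (LinearMap.range (p ∘ₗ q))) ≃ₗ[ℂ]
      ((LinearMap.ker (p ∘ₗ q) : Submodule ℂ H) ⧸
        Submodule.comap (LinearMap.ker (p ∘ₗ q)).subtype
          (LinearMap.range p ⊔ LinearMap.range q))) := by
  obtain rfl : ps = LinearMap.adjoint p := by
    rw [(LinearMap.eq_adjoint_iff p ps).mpr hps, LinearMap.adjoint_adjoint]
  obtain rfl : qs = LinearMap.adjoint q := by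
    rw [(LinearMap.eq_adjoint_iff q qs).mpr hqs, LinearMap.adjoint_adjoint]
  rw [← LinearMap.comp_assoc, ← LinearEquiv.conj_apply] at hst1 hst2
  have hΔ : st.conj (deltaBC p q (LinearMap.adjoint p) (LinearMap.adjoint q))
      = deltaA p q (LinearMap.adjoint p) (LinearMap.adjoint q) := by
    rw [st.conj_deltaBC, neg_eq_iff_eq_neg.mp hst1.symm, neg_eq_iff_eq_neg.mp hst2.symm,
      st.conj_adjoint_eq_neg hunit hst2, st.conj_adjoint_eq_neg hunit hst1,
      deltaBC_neg_eq_deltaA]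
  refine ⟨by rw [← hΔ, LinearEquiv.ker_conj], nonempty_subquotient_equiv
    (range_comp_le_ker_inf_ker hp hq hpq) (range_sup_range_le_ker_comp hp hq hpq) ?_⟩
  have hBC := finrank_ker_inf_ker_add_finrank_range_sup_range st hst1 hst2
  have hA := (p ∘ₗ q).finrank_range_add_finrank_ker
  omega
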